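/- arXiv:0706.3451 — 2 statements merged into one kernel-verified Lean document; each statement's English description precedes it below -/
import Mathlib

section
/- Let (A, 𝔪, k) be a commutative Noetherian local ring, let M be a finitely generated A-module having free reducible complexity, and let 0 → K → F → M → 0 be an exact sequence of finitely generated A-modules in which F is free. Then K also has free reducible complexity; in particular, every syzygy Ω^i_A(M), i ≥ 0, has free reducible complexity. -/
open CategoryTheory Opposite Filter IsLocalRing

universe u

namespace ComplexityTest

variable (A : Type u) [CommRing A] [IsLocalRing A]

structure MinFreeRes (M : Type u) [AddCommGroup M] [Module A M] : Type u where
  b : ℕ → ℕ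
  d : (n : ℕ) → ((Fin (b (n + 1)) → A) →ₗ[A] (Fin (b n) → A))
  aug : (Fin (b 0) → A) →ₗ[A] M
  aug_surjective : Function.Surjective aug
  exact_zero : Function.Exact (d 0) aug
  exact_succ : ∀ n, Function.Exact (d (n + 1)) (d n)
  minimal : ∀ n x i, d n x i ∈ maximalIdeal A

variable (M : Type u) [AddCommGroup M] [Module A M]

def HasComplexityLE (t : ℕ) : Prop :=
  ∃ (R : MinFreeRes A M) (a : ℝ), ∀ᶠ n : ℕ in atTop, (R.b n : ℝ) ≤ a * (n : ℝ) ^ ((t : ℤ) - 1)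

noncomputable def complexity : ℕ∞ :=
  sInf {c : ℕ∞ | ∃ t : ℕ, c = t ∧ HasComplexityLE A M t}

def HasProjDimLE (t : ℕ) : Prop :=
  ∃ R : MinFreeRes A M, ∀ i, t < i → R.b i = 0

noncomputable def projDim : ℕ∞ :=
  sInf {c : ℕ∞ | ∃ t : ℕ, c = t ∧ HasProjDimLE A M t}

def HasFiniteProjDim : Prop :=
  ∃ t : ℕ, HasProjDimLE A M t

def IsSyzygyOf (S : Type u) [AddCommGroup S] [Module A S] : ℕ → Prop
  | 0 => Nonempty (S ≃ₗ[A] M)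
  | 1 => ∃ R : MinFreeRes A M, Nonempty (S ≃ₗ[A] (LinearMap.ker R.aug))
  | (n + 2) => ∃ R : MinFreeRes A M, Nonempty (S ≃ₗ[A] (LinearMap.ker (R.d n)))

variable {A M} in
def IsSES {K S : Type u} [AddCommGroup K] [Module A K] [AddCommGroup S] [Module A S]
    (f : M →ₗ[A] K) (g : K →ₗ[A] S) : Prop :=
  Function.Injective f ∧ Function.Exact f g ∧ Function.Surjective g

noncomputable def extModule (n : ℕ) (N : Type u) [AddCommGroup N] [Module A N] :
    ModuleCat A :=
  ((_root_.Ext A (ModuleCat.{u} A) n).obj (op (ModuleCat.of A M))).obj (ModuleCat.of A N)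

def extVanish (n : ℕ) (N : Type u) [AddCommGroup N] [Module A N] : Prop :=
  Subsingleton (extModule A M n N)

/-- The `n`-th Tor module `Tor^A_n(M, N)`. -/
noncomputable def torModule (n : ℕ) (N : Type u) [AddCommGroup N] [Module A N] :
    ModuleCat A :=
  ((Tor (ModuleCat.{u} A) n).obj (ModuleCat.of A M)).obj (ModuleCat.of A N)

/-- The vanishing `Tor^A_n(M, N) = 0`. -/
def torVanish (n : ℕ) (N : Type u) [AddCommGroup N] [Module A N] : Prop :=
  Subsingleton (torModule A M n N)

noncomputable def depth : ℕ∞ :=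
  sInf {c : ℕ∞ | ∃ i : ℕ, c = i ∧ ¬ extVanish A (ResidueField A) i M}

variable {A}

/-- The category of modules of *free reducible complexity* over the local ring `A`.
It is defined inductively: every finitely generated module of finite projective
dimension has free reducible complexity, and a finitely generated module `M` of finite
positive complexity has free reducible complexity provided there is a short exact
sequence `0 → M → K → Ω^n_A(M) → 0` (necessarily induced by a cohomology element
`η ∈ Ext^{n+1}_A(M,M)`) where `K` is a finitely generated module of free reducible
complexity with `cx K = cx M - 1`. -/
inductive HasFreeRedCxCat : ModuleCat.{u} A → Prop
  | of_finite_projDim (M : ModuleCat.{u} A) (hfg : Module.Finite A M)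
      (h : HasFiniteProjDim A M) : HasFreeRedCxCat M
  | step (M K S : ModuleCat.{u} A) (n : ℕ)
      (hfg : Module.Finite A M) (hKfg : Module.Finite A K)
      (hpos : 0 < complexity A M) (hfin : complexity A M ≠ ⊤)
      (hsyz : IsSyzygyOf A M S n)
      (f : M →ₗ[A] K) (g : K →ₗ[A] S) (hses : IsSES f g)
      (hcx : complexity A K = complexity A M - 1)
      (hK : HasFreeRedCxCat K) : HasFreeRedCxCat M

/-- The category of modules of *reducible complexity* over the local ring `A`: as for
free reducible complexity, but where in addition the reductions are required to
preserve depth. -/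
inductive HasRedCxCat : ModuleCat.{u} A → Prop
  | of_finite_projDim (M : ModuleCat.{u} A) (hfg : Module.Finite A M)
      (h : HasFiniteProjDim A M) : HasRedCxCat M
  | step (M K S : ModuleCat.{u} A) (n : ℕ)
      (hfg : Module.Finite A M) (hKfg : Module.Finite A K)
      (hpos : 0 < complexity A M) (hfin : complexity A M ≠ ⊤)
      (hsyz : IsSyzygyOf A M S n)
      (f : M →ₗ[A] K) (g : K →ₗ[A] S) (hses : IsSES f g)
      (hcx : complexity A K = complexity A M - 1)
      (hdepth : depth A K = depth A M)
      (hK : HasRedCxCat K) : HasRedCxCat M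

variable (A)

/-- `M` has free reducible complexity. -/
def HasFreeRedCx (M : Type u) [AddCommGroup M] [Module A M] : Prop :=
  HasFreeRedCxCat (ModuleCat.of A M)

/-- `M` has reducible complexity. -/
def HasRedCx (M : Type u) [AddCommGroup M] [Module A M] : Prop :=
  HasRedCxCat (ModuleCat.of A M)

/-- A Noetherian local ring is Gorenstein if it has finite injective dimension over
itself; by Bass' characterization, this is equivalent to the vanishing of
`Ext^i_A(k, A)` for all sufficiently large `i`. -/
def IsGorenstein : Prop :=
  ∃ n : ℕ, ∀ i : ℕ, n < i → extVanish A (ResidueField A) i A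

end ComplexityTest

open ComplexityTest

/-!
A kernel `K` of a free cover `F → M` is `Ω¹M ⊕ A^c`, so a minimal resolution of `M`, shifted
by one and with `A^c` added in degree `0`, is a minimal resolution of `K`. Betti numbers of
minimal resolutions are unique (two minimal covers are isomorphic: a direct summand of `F`
inside `𝔪F` vanishes by Nakayama), hence `cx K = cx M`, and finite projective dimension passes
to `K`.

For a reduction `0 → M → K_η → Ωⁿ M → 0`, pick a free cover `G → Ωⁿ M` whose kernel is an
`n`-th syzygy of `K` (`g` itself if `n = 0`, the minimal cover of `Ωⁿ M` otherwise). The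
horseshoe map `F × G → K_η` has a kernel `L` sitting in `0 → K → L → Ωⁿ K → 0`; by induction
`L` has free reducible complexity, and `cx L = cx K_η = cx K - 1`. Syzygies are kernels of free
covers of the previous ones.
-/

namespace ComplexityTest

open Asymptotics

section Modules

variable {R M N P M' : Type u} [CommRing R] [AddCommGroup M] [Module R M] [AddCommGroup N]
  [Module R N] [AddCommGroup P] [Module R P] [AddCommGroup M'] [Module R M']

lemma isSES_subtype_ker {g : N →ₗ[R] P} (hg : Function.Surjective g) :
    IsSES (LinearMap.ker g).subtype g :=
  ⟨Subtype.val_injective, LinearMap.exact_subtype_ker_map g, hg⟩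

lemma IsSES.comp_linearEquiv {f : M →ₗ[R] N} {g : N →ₗ[R] P} (h : IsSES f g)
    (e : M' ≃ₗ[R] M) : IsSES (f ∘ₗ e.toLinearMap) g :=
  ⟨h.1.comp e.injective, LinearEquiv.precomp_exact_iff_exact.mpr h.2.1, h.2.2⟩

noncomputable def IsSES.equivKer {f : M →ₗ[R] N} {g : N →ₗ[R] P} (h : IsSES f g) :
    M ≃ₗ[R] LinearMap.ker g :=
  (LinearEquiv.ofInjective f h.1).trans (LinearEquiv.ofEq _ _ h.2.1.linearMap_ker_eq.symm)

lemma pi_mem_smul_top {ι : Type*} [Fintype ι] {I : Ideal R} {x : ι → R}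
    (hx : ∀ i, x i ∈ I) : x ∈ I • (⊤ : Submodule R (ι → R)) := by
  classical
  rw [pi_eq_sum_univ x]
  exact Submodule.sum_mem _ fun i _ => Submodule.smul_mem_smul (hx i) trivial

def comapEquivProdKer (α : M →ₗ[R] N) {s : N →ₗ[R] M} (hs : α ∘ₗ s = LinearMap.id)
    (W : Submodule R N) : W.comap α ≃ₗ[R] W × LinearMap.ker α where
  toFun x := (⟨α x, x.2⟩, ⟨x - s (α x), by simp [← LinearMap.comp_apply α s, hs]⟩)
  invFun w := ⟨s w.1 + w.2, by simp [← LinearMap.comp_apply α s, hs]⟩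
  map_add' x y := by ext <;> simp; abel
  map_smul' r x := by ext <;> simp [smul_sub]
  left_inv x := by ext; simp
  right_inv w := by ext <;> simp [← LinearMap.comp_apply α s, hs]

end Modules

theorem exists_isSES_ker_of_isSES {R M E S K F G : Type u} [CommRing R]
    [AddCommGroup M] [Module R M] [AddCommGroup E] [Module R E] [AddCommGroup S] [Module R S]
    [AddCommGroup K] [Module R K] [AddCommGroup F] [Module R F] [AddCommGroup G] [Module R G]
    [Module.Projective R G] {fM : M →ₗ[R] E} {gM : E →ₗ[R] S} (hM : IsSES fM gM)
    {f : K →ₗ[R] F} {g : F →ₗ[R] M} (hK : IsSES f g) {q : G →ₗ[R] S}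
    (hq : Function.Surjective q) :
    ∃ h : F × G →ₗ[R] E, Function.Surjective h ∧
      ∃ (i : K →ₗ[R] LinearMap.ker h) (π : LinearMap.ker h →ₗ[R] LinearMap.ker q), IsSES i π := by
  obtain ⟨l, hl⟩ := Module.projective_lifting_property gM q hM.2.2
  have hgl : ∀ y, gM (l y) = q y := fun y => congrArg (· y) hl
  have hlift : ∀ z, gM z = 0 → ∃ x, fM (g x) = z := fun z hz => by
    obtain ⟨m, rfl⟩ := (hM.2.1 z).mp hz
    obtain ⟨x, rfl⟩ := hK.2.2 m
    exact ⟨x, rfl⟩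
  let h := (fM ∘ₗ g).coprod l
  have hsurj : Function.Surjective h := fun z => by
    obtain ⟨y, hy⟩ := hq (gM z)
    obtain ⟨x, hx⟩ := hlift (z - l y) (by rw [map_sub, hgl, hy, sub_self])
    exact ⟨(x, y), by simp [h, hx]⟩
  have hq_snd : ∀ z : LinearMap.ker h, q z.1.2 = 0 := fun ⟨(x, y), hz⟩ => by
    have := congrArg gM (LinearMap.mem_ker.mp hz)
    simpa [h, hgl, hM.2.1.apply_apply_eq_zero] using this
  let i : K →ₗ[R] LinearMap.ker h := (LinearMap.inl R F G ∘ₗ f).codRestrict _ fun k => by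
    simp [h, hK.2.1.apply_apply_eq_zero]
  let π : LinearMap.ker h →ₗ[R] LinearMap.ker q :=
    (LinearMap.snd R F G ∘ₗ (LinearMap.ker h).subtype).codRestrict _ hq_snd
  refine ⟨h, hsurj, i, π, fun k k' hk => hK.1 (congrArg (·.1.1) hk), ?_, ?_⟩
  · rintro ⟨⟨x, y⟩, hz⟩
    simp only [π, i, Set.mem_range, Subtype.ext_iff, Prod.ext_iff]
    constructor
    · rintro (rfl : y = 0)
      have : fM (g x) = 0 := by simpa [h] using hz
      obtain ⟨k, rfl⟩ := (hK.2.1 x).mp (hM.1 (this.trans (map_zero fM).symm))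
      exact ⟨k, rfl, rfl⟩
    · rintro ⟨k, -, rfl⟩
      rfl
  · rintro ⟨y, hy⟩
    obtain ⟨x, hx⟩ := hlift (l y) (by rw [hgl, LinearMap.mem_ker.mp hy])
    exact ⟨⟨(-x, y), by simp [h, hx]⟩, rfl⟩

variable {A : Type u} [CommRing A] [IsLocalRing A]

lemma ker_eq_bot_of_ker_le_smul_top {F P : Type u} [AddCommGroup F] [Module A F]
    [Module.Finite A F] [AddCommGroup P] [Module A P] {α : F →ₗ[A] P} {s : P →ₗ[A] F}
    (hs : α ∘ₗ s = LinearMap.id) (h : LinearMap.ker α ≤ maximalIdeal A • ⊤) :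
    LinearMap.ker α = ⊥ := by
  set p : F →ₗ[A] F := LinearMap.id - s ∘ₗ α
  have hp : ∀ x, α (p x) = 0 := fun x => by
    simp [p, ← LinearMap.comp_apply α s, hs]
  have hpx : ∀ x ∈ LinearMap.ker α, p x = x := fun x hx => by
    simp [p, LinearMap.mem_ker.mp hx]
  have hrange : LinearMap.range p = LinearMap.ker α :=
    le_antisymm (LinearMap.range_le_ker_iff.mpr (LinearMap.ext hp))
      fun x hx => hpx x hx ▸ LinearMap.mem_range_self p x
  rw [← hrange]
  refine Submodule.eq_bot_of_le_smul_of_le_jacobson_bot _ _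
    (LinearMap.range_eq_map p ▸ Module.Finite.fg_top.map p) (fun x hx => ?_)
    (maximalIdeal_le_jacobson _)
  rw [hrange] at hx
  rw [← hpx x hx, LinearMap.range_eq_map, ← Submodule.map_smul'']
  exact Submodule.mem_map_of_mem (h hx)

def prodFinEquiv (m c : ℕ) :
    (Fin (m + c) → A) ≃ₗ[A] (Fin m → A) × (Fin c → A) :=
  (LinearEquiv.funCongrLeft A A finSumFinEquiv).trans
    (LinearEquiv.sumArrowLequivProdArrow (Fin m) (Fin c) A A)

namespace MinFreeRes

variable {M N K F : Type u} [AddCommGroup M] [Module A M] [AddCommGroup N] [Module A N]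
  [AddCommGroup K] [Module A K] [AddCommGroup F] [Module A F]

section

variable (R : MinFreeRes A M)

/-- `R.syz n` is the syzygy `Ωⁿ⁺¹ M`, the kernel of the augmentation for `n = 0` and of
`R.d (n - 1)` otherwise. -/
def syz : (n : ℕ) → Submodule A (Fin (R.b n) → A)
  | 0 => LinearMap.ker R.aug
  | n + 1 => LinearMap.ker (R.d n)

lemma range_d (n : ℕ) : LinearMap.range (R.d n) = R.syz n := by
  cases n
  · exact R.exact_zero.linearMap_ker_eq.symm
  · exact (R.exact_succ _).linearMap_ker_eq.symm

lemma syz_le_smul_top (n : ℕ) : R.syz n ≤ maximalIdeal A • ⊤ := by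
  rw [← R.range_d]
  rintro _ ⟨x, rfl⟩
  exact pi_mem_smul_top (R.minimal n x)

def toSyz (n : ℕ) : (Fin (R.b (n + 1)) → A) →ₗ[A] R.syz n :=
  (R.d n).codRestrict (R.syz n) fun x => R.range_d n ▸ LinearMap.mem_range_self (R.d n) x

lemma toSyz_surjective (n : ℕ) : Function.Surjective (R.toSyz n) := by
  rintro ⟨y, hy⟩
  obtain ⟨x, rfl⟩ : y ∈ LinearMap.range (R.d n) := R.range_d n ▸ hy
  exact ⟨x, rfl⟩

lemma ker_toSyz (n : ℕ) : LinearMap.ker (R.toSyz n) = R.syz (n + 1) :=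
  LinearMap.ker_codRestrict _ _ _

lemma isSES_syz_zero : IsSES (R.syz 0).subtype R.aug :=
  isSES_subtype_ker R.aug_surjective

lemma isSES_syz_succ (n : ℕ) : IsSES (R.syz (n + 1)).subtype (R.toSyz n) :=
  ⟨Subtype.val_injective,
    LinearMap.exact_iff.mpr (by rw [ker_toSyz, Submodule.range_subtype]), R.toSyz_surjective n⟩

def tail : MinFreeRes A (R.syz 0) where
  b n := R.b (n + 1)
  d n := R.d (n + 1)
  aug := R.toSyz 0
  aug_surjective := R.toSyz_surjective 0
  exact_zero := LinearMap.exact_iff.mpr (by rw [ker_toSyz, range_d])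
  exact_succ n := R.exact_succ (n + 1)
  minimal n := R.minimal (n + 1)

lemma tail_syz (n : ℕ) : R.tail.syz n = R.syz (n + 1) := by
  cases n
  · exact R.ker_toSyz 0
  · rfl

def ofEquiv (e : M ≃ₗ[A] N) : MinFreeRes A N where
  b := R.b
  d := R.d
  aug := e.toLinearMap ∘ₗ R.aug
  aug_surjective := e.surjective.comp R.aug_surjective
  exact_zero := LinearEquiv.postcomp_exact_iff_exact.mpr R.exact_zero
  exact_succ := R.exact_succ
  minimal := R.minimal

lemma ofEquiv_syz (e : M ≃ₗ[A] N) (n : ℕ) : (R.ofEquiv e).syz n = R.syz n := by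
  cases n
  · exact LinearEquiv.ker_comp e R.aug
  · rfl

def prodFree (c : ℕ) : MinFreeRes A (M × (Fin c → A)) where
  b n := match n with
    | 0 => R.b 0 + c
    | n + 1 => R.b (n + 1)
  d n := match n with
    | 0 => (prodFinEquiv (R.b 0) c).symm.toLinearMap ∘ₗ LinearMap.inl A _ _ ∘ₗ R.d 0
    | n + 1 => R.d (n + 1)
  aug := R.aug.prodMap LinearMap.id ∘ₗ (prodFinEquiv (R.b 0) c).toLinearMap
  aug_surjective :=
    (R.aug_surjective.prodMap Function.surjective_id).comp (prodFinEquiv (R.b 0) c).surjective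
  exact_zero := by
    refine (LinearEquiv.conj_symm_exact_iff_exact _ _ _).mpr fun ⟨y, z⟩ => ?_
    simp only [LinearMap.prodMap_apply, LinearMap.id_coe, id_eq,
      LinearMap.coe_comp, Function.comp_apply, LinearMap.inl_apply, Set.mem_range, Prod.ext_iff]
    constructor
    · rintro ⟨hy, rfl⟩
      obtain ⟨x, rfl⟩ := (R.exact_zero y).mp hy
      exact ⟨x, rfl, rfl⟩
    · rintro ⟨x, rfl, rfl⟩
      exact ⟨R.exact_zero.apply_apply_eq_zero x, rfl⟩
  exact_succ n := match n with
    | 0 => (Function.Injective.comp_exact_iff_exact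
        ((prodFinEquiv (R.b 0) c).symm.injective.comp LinearMap.inl_injective)
        (i := (prodFinEquiv (R.b 0) c).symm.toLinearMap ∘ₗ LinearMap.inl A _ _)).mpr
        (R.exact_succ 0)
    | n + 1 => R.exact_succ (n + 1)
  minimal n := match n with
    | 0 => fun x i => by
      change Sum.elim (R.d 0 x) 0 (finSumFinEquiv.symm i) ∈ maximalIdeal A
      rcases finSumFinEquiv.symm i with j | j
      · exact R.minimal 0 x j
      · exact zero_mem _
    | n + 1 => R.minimal (n + 1)

lemma prodFree_syz_succ (c n : ℕ) : (R.prodFree c).syz (n + 1) = R.syz (n + 1) := by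
  cases n
  · ext x
    change (prodFinEquiv (R.b 0) c).symm (R.d 0 x, 0) = 0 ↔ R.d 0 x = 0
    rw [LinearEquiv.map_eq_zero_iff, Prod.mk_eq_zero, and_iff_left rfl]
  · rfl

lemma mem_prodFree_syz_zero {c : ℕ} {x : Fin (R.b 0 + c) → A} :
    x ∈ (R.prodFree c).syz 0 ↔
      (prodFinEquiv (R.b 0) c x).1 ∈ R.syz 0 ∧ (prodFinEquiv (R.b 0) c x).2 = 0 :=
  Prod.ext_iff

def prodFreeSyzZeroEquiv (c : ℕ) : (R.prodFree c).syz 0 ≃ₗ[A] R.syz 0 where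
  toFun x := ⟨(prodFinEquiv (R.b 0) c x.1).1, (R.mem_prodFree_syz_zero.mp x.2).1⟩
  invFun y := ⟨(prodFinEquiv (R.b 0) c).symm (y, 0), R.mem_prodFree_syz_zero.mpr (by simp)⟩
  map_add' x y := Subtype.ext (congrArg Prod.fst (map_add (prodFinEquiv (R.b 0) c) x.1 y.1))
  map_smul' r x := Subtype.ext (congrArg Prod.fst (map_smul (prodFinEquiv (R.b 0) c) r x.1))
  left_inv x := Subtype.ext <| by
    change (prodFinEquiv (R.b 0) c).symm ((prodFinEquiv (R.b 0) c x.1).1, 0) = x.1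
    rw [← (R.mem_prodFree_syz_zero.mp x.2).2, Prod.mk.eta]
    exact (prodFinEquiv (R.b 0) c).symm_apply_apply x.1
  right_inv y := by simp

lemma surjective_of_surjective_aug_comp {E : Type u} [AddCommGroup E] [Module A E]
    {α : E →ₗ[A] Fin (R.b 0) → A} (h : Function.Surjective (R.aug ∘ₗ α)) :
    Function.Surjective α := by
  refine α.surjective_of_surjective_comp_mkQ _ (maximalIdeal_le_jacobson _) ?_
  rintro ⟨y⟩
  obtain ⟨x, hx⟩ := h (R.aug y)
  refine ⟨x, (Submodule.Quotient.eq _).mpr (R.syz_le_smul_top 0 ?_)⟩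
  simpa [syz, sub_eq_zero] using hx

lemma exists_lift {F : Type u} [AddCommGroup F] [Module A F] [Module.Projective A F]
    {g : F →ₗ[A] M} (hg : Function.Surjective g) :
    ∃ α : F →ₗ[A] Fin (R.b 0) → A, R.aug ∘ₗ α = g ∧ Function.Surjective α := by
  obtain ⟨α, hα⟩ := Module.projective_lifting_property R.aug g R.aug_surjective
  exact ⟨α, hα, R.surjective_of_surjective_aug_comp (hα ▸ hg)⟩

end

theorem exists_equiv_aug (R R' : MinFreeRes A M) :
    ∃ e : (Fin (R'.b 0) → A) ≃ₗ[A] (Fin (R.b 0) → A), R.aug ∘ₗ e.toLinearMap = R'.aug := by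
  obtain ⟨α, hα, hαs⟩ := R.exists_lift R'.aug_surjective
  obtain ⟨s, hs⟩ := Module.projective_lifting_property α LinearMap.id hαs
  have hker : LinearMap.ker α ≤ maximalIdeal A • ⊤ := fun x hx =>
    R'.syz_le_smul_top 0 (by simp [syz, ← hα, LinearMap.mem_ker.mp hx])
  exact ⟨.ofBijective α ⟨LinearMap.ker_eq_bot.mp (ker_eq_bot_of_ker_le_smul_top hs hker), hαs⟩, hα⟩

lemma nonempty_syz_zero_equiv (R R' : MinFreeRes A M) : Nonempty (R'.syz 0 ≃ₗ[A] R.syz 0) := by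
  obtain ⟨e, he⟩ := exists_equiv_aug R R'
  refine ⟨e.ofSubmodules _ _ ?_⟩
  rw [syz, ← he, LinearMap.ker_comp, Submodule.map_comap_eq_of_surjective e.surjective]
  rfl

theorem b_eq (R R' : MinFreeRes A M) (n : ℕ) : R.b n = R'.b n := by
  induction n generalizing M with
  | zero =>
    obtain ⟨e, -⟩ := exists_equiv_aug R' R
    simpa using e.finrank_eq
  | succ n ih =>
    obtain ⟨σ⟩ := nonempty_syz_zero_equiv R R'
    exact ih R.tail (R'.tail.ofEquiv σ)

section FreeCover

variable [Module.Free A F] [Module.Finite A F]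

theorem exists_equiv_syz_zero_prod (R : MinFreeRes A M) {f : K →ₗ[A] F} {g : F →ₗ[A] M}
    (hses : IsSES f g) : ∃ c : ℕ, Nonempty (K ≃ₗ[A] R.syz 0 × (Fin c → A)) := by
  obtain ⟨α, hα, hαs⟩ := R.exists_lift hses.2.2
  obtain ⟨s, hs⟩ := Module.projective_lifting_property α LinearMap.id hαs
  let r : F →ₗ[A] LinearMap.ker α := (LinearMap.id - s ∘ₗ α).codRestrict _ fun x => by
    simp [← LinearMap.comp_apply α s, hs]
  have hr : r ∘ₗ (LinearMap.ker α).subtype = LinearMap.id := by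
    ext x
    simp [r, LinearMap.mem_ker.mp x.2]
  have : Module.Projective A (LinearMap.ker α) := .of_split _ _ hr
  have : Module.Finite A (LinearMap.ker α) :=
    .of_surjective r fun x => ⟨x, congrArg (· x) hr⟩
  have : Module.Free A (LinearMap.ker α) := Module.free_of_flat_of_isLocalRing
  have hker : LinearMap.ker g = (R.syz 0).comap α := by rw [← hα, LinearMap.ker_comp]; rfl
  exact ⟨_, ⟨hses.equivKer ≪≫ₗ LinearEquiv.ofEq _ _ hker ≪≫ₗ comapEquivProdKer α hs _ ≪≫ₗ
    (LinearEquiv.refl A _).prodCongr (Module.finBasis A (LinearMap.ker α)).equivFun⟩⟩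

theorem exists_shift_of_isSES (R : MinFreeRes A M) {f : K →ₗ[A] F} {g : F →ₗ[A] M}
    (hses : IsSES f g) : ∃ R' : MinFreeRes A K,
      (∀ n, R'.b (n + 1) = R.b (n + 2)) ∧ ∀ n, Nonempty (R'.syz n ≃ₗ[A] R.syz (n + 1)) := by
  obtain ⟨c, ⟨e⟩⟩ := R.exists_equiv_syz_zero_prod hses
  refine ⟨(R.tail.prodFree c).ofEquiv e.symm, fun n => rfl, fun n => ?_⟩
  rw [ofEquiv_syz, ← tail_syz]
  cases n with
  | zero => exact ⟨R.tail.prodFreeSyzZeroEquiv c⟩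
  | succ n => exact ⟨.ofEq _ _ (R.tail.prodFree_syz_succ c n)⟩

end FreeCover

end MinFreeRes

lemma isBigO_zpow_comp_succ_iff {b : ℕ → ℝ} {k : ℤ} :
    (fun n => b (n + 1)) =O[atTop] (fun n : ℕ => (n : ℝ) ^ k) ↔
      b =O[atTop] (fun n : ℕ => (n : ℝ) ^ k) := by
  have hequiv : (fun n : ℕ => (n : ℝ) + 1) ~[atTop] (fun n : ℕ => (n : ℝ)) :=
    IsEquivalent.refl.add_const_of_norm_tendsto_atTop
      (tendsto_norm_atTop_atTop.comp tendsto_natCast_atTop_atTop)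
  have htheta : (fun n : ℕ => ((n + 1 : ℕ) : ℝ) ^ k) =Θ[atTop] (fun n : ℕ => (n : ℝ) ^ k) := by
    push_cast
    exact (hequiv.zpow k).isTheta
  have hshift := isBigO_map (f := b) (g := fun n : ℕ => (n : ℝ) ^ k) (k := (· + 1)) (l := atTop)
  rw [map_add_atTop_eq_nat] at hshift
  rw [← htheta.isBigO_congr_right]
  exact hshift.symm

section Complexity

variable {M N K F : Type u} [AddCommGroup M] [Module A M] [AddCommGroup N] [Module A N]
  [AddCommGroup K] [Module A K] [AddCommGroup F] [Module A F]

lemma hasComplexityLE_iff_isBigO (R : MinFreeRes A M) (t : ℕ) :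
    HasComplexityLE A M t ↔
      (fun n => (R.b n : ℝ)) =O[atTop] (fun n : ℕ => (n : ℝ) ^ ((t : ℤ) - 1)) := by
  simp only [isBigO_iff, Real.norm_natCast, norm_zpow]
  constructor
  · rintro ⟨R', a, ha⟩
    exact ⟨a, by simpa only [R'.b_eq R] using ha⟩
  · rintro ⟨a, ha⟩
    exact ⟨R, a, ha⟩

lemma complexity_eq_of_forall_iff (h : ∀ t, HasComplexityLE A M t ↔ HasComplexityLE A N t) :
    complexity A M = complexity A N := by
  simp only [complexity, h]

lemma complexity_congr (e : M ≃ₗ[A] N) : complexity A M = complexity A N :=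
  complexity_eq_of_forall_iff fun _ =>
    ⟨fun ⟨R, a, h⟩ => ⟨R.ofEquiv e, a, h⟩, fun ⟨R, a, h⟩ => ⟨R.ofEquiv e.symm, a, h⟩⟩

lemma nonempty_minFreeRes_of_complexity_ne_top (h : complexity A M ≠ ⊤) :
    Nonempty (MinFreeRes A M) := by
  contrapose! h
  rw [complexity, sInf_eq_top]
  rintro _ ⟨t, rfl, R, -⟩
  exact (h.false R).elim

variable [Module.Free A F] [Module.Finite A F] {f : K →ₗ[A] F} {g : F →ₗ[A] M}

lemma complexity_eq_of_isSES (hses : IsSES f g) (hM : complexity A M ≠ ⊤) :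
    complexity A K = complexity A M := by
  obtain ⟨R⟩ := nonempty_minFreeRes_of_complexity_ne_top hM
  obtain ⟨R', hb, -⟩ := R.exists_shift_of_isSES hses
  refine complexity_eq_of_forall_iff fun t => ?_
  rw [hasComplexityLE_iff_isBigO R', hasComplexityLE_iff_isBigO R,
    ← isBigO_zpow_comp_succ_iff (b := fun n => (R'.b n : ℝ)),
    ← isBigO_zpow_comp_succ_iff (b := fun n => (R.b n : ℝ)),
    ← isBigO_zpow_comp_succ_iff (b := fun n => (R.b (n + 1) : ℝ))]
  simp only [hb]

lemma hasFiniteProjDim_congr (e : M ≃ₗ[A] N) (h : HasFiniteProjDim A M) : HasFiniteProjDim A N :=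
  let ⟨t, R, hR⟩ := h
  ⟨t, R.ofEquiv e, hR⟩

lemma hasFiniteProjDim_of_isSES (hses : IsSES f g) (h : HasFiniteProjDim A M) :
    HasFiniteProjDim A K := by
  obtain ⟨t, R, hR⟩ := h
  obtain ⟨R', hb, -⟩ := R.exists_shift_of_isSES hses
  refine ⟨t, R', fun i hi => ?_⟩
  obtain ⟨n, rfl⟩ := Nat.exists_eq_add_one_of_ne_zero (by omega : i ≠ 0)
  rw [hb]
  exact hR _ (by omega)

end Complexity

section Syzygy

variable {M M' S S' : Type u} [AddCommGroup M] [Module A M] [AddCommGroup M'] [Module A M']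
  [AddCommGroup S] [Module A S] [AddCommGroup S'] [Module A S']

lemma isSyzygyOf_succ_iff {n : ℕ} :
    IsSyzygyOf A M S (n + 1) ↔ ∃ R : MinFreeRes A M, Nonempty (S ≃ₗ[A] R.syz n) := by
  cases n <;> rfl

lemma IsSyzygyOf.congr {n : ℕ} (e : M ≃ₗ[A] M') (e' : S ≃ₗ[A] S') (h : IsSyzygyOf A M S n) :
    IsSyzygyOf A M' S' n := by
  cases n with
  | zero => exact let ⟨σ⟩ := h; ⟨e'.symm.trans (σ.trans e)⟩
  | succ n =>
    obtain ⟨R, ⟨σ⟩⟩ := isSyzygyOf_succ_iff.mp h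
    exact isSyzygyOf_succ_iff.mpr
      ⟨R.ofEquiv e, ⟨e'.symm.trans (σ.trans (.ofEq _ _ (R.ofEquiv_syz e n).symm))⟩⟩

theorem exists_surjective_isSyzygyOf_ker {K F : Type u} [AddCommGroup K] [Module A K]
    [AddCommGroup F] [Module A F] [Module.Free A F] [Module.Finite A F]
    {f : K →ₗ[A] F} {g : F →ₗ[A] M} (hses : IsSES f g) {n : ℕ} (hS : IsSyzygyOf A M S n) :
    ∃ (b : ℕ) (q : (Fin b → A) →ₗ[A] S),
      Function.Surjective q ∧ IsSyzygyOf A K (LinearMap.ker q) n := by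
  cases n with
  | zero =>
    obtain ⟨eS⟩ := hS
    let eF := (Module.finBasis A F).equivFun
    have hses' : IsSES (eF.toLinearMap ∘ₗ f) (eS.symm.toLinearMap ∘ₗ g ∘ₗ eF.symm.toLinearMap) :=
      ⟨eF.injective.comp hses.1,
        LinearEquiv.postcomp_exact_iff_exact.mpr
          ((LinearEquiv.conj_exact_iff_exact _ _ _).mpr hses.2.1),
        eS.symm.surjective.comp (hses.2.2.comp eF.symm.surjective)⟩
    exact ⟨_, _, hses'.2.2, ⟨hses'.equivKer.symm⟩⟩
  | succ n =>
    obtain ⟨R, ⟨eS⟩⟩ := isSyzygyOf_succ_iff.mp hS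
    obtain ⟨R', -, hsyz⟩ := R.exists_shift_of_isSES hses
    obtain ⟨σ⟩ := hsyz n
    have hker : LinearMap.ker (eS.symm.toLinearMap ∘ₗ R.toSyz n) = R.syz (n + 1) := by
      rw [LinearEquiv.ker_comp, MinFreeRes.ker_toSyz]
    exact ⟨_, _, eS.symm.surjective.comp (R.toSyz_surjective n),
      isSyzygyOf_succ_iff.mpr ⟨R', ⟨(LinearEquiv.ofEq _ _ hker).trans σ.symm⟩⟩⟩

end Syzygy

theorem HasFreeRedCxCat.of_equiv {X : ModuleCat.{u} A} (hX : HasFreeRedCxCat X) {Y : Type u}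
    [AddCommGroup Y] [Module A Y] (e : X ≃ₗ[A] Y) : HasFreeRedCx A Y := by
  induction hX generalizing Y with
  | of_finite_projDim M hfg h =>
    exact .of_finite_projDim _ (Module.Finite.equiv e) (hasFiniteProjDim_congr e h)
  | step M Kη S n hfg _ hpos hfin hsyz fM gM hses hcx hKη _ =>
    have hcxY := complexity_congr e
    exact .step _ Kη S n (Module.Finite.equiv e) ‹_› (hcxY ▸ hpos) (hcxY ▸ hfin)
      (hsyz.congr e (.refl A S)) _ gM (hses.comp_linearEquiv e.symm) (hcxY ▸ hcx) hKη

theorem HasFreeRedCx.of_equiv {M N : Type u} [AddCommGroup M] [Module A M] [AddCommGroup N]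
    [Module A N] (hM : HasFreeRedCx A M) (e : M ≃ₗ[A] N) : HasFreeRedCx A N :=
  HasFreeRedCxCat.of_equiv hM e

variable [IsNoetherianRing A]

theorem HasFreeRedCxCat.of_isSES {X : ModuleCat.{u} A} (hX : HasFreeRedCxCat X) {K F : Type u}
    [AddCommGroup K] [Module A K] [AddCommGroup F] [Module A F] [Module.Free A F]
    [Module.Finite A F] {f : K →ₗ[A] F} {g : F →ₗ[A] X} (hses : IsSES f g) :
    HasFreeRedCx A K := by
  induction hX generalizing K F with
  | of_finite_projDim M _ h =>
    exact .of_finite_projDim _ (.of_injective f hses.1) (hasFiniteProjDim_of_isSES hses h)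
  | step M Kη S n _ _ hpos hfin hsyz fM gM hsesM hcx _ ih =>
    obtain ⟨b, q, hq, hsyzK⟩ := exists_surjective_isSyzygyOf_ker hses hsyz
    obtain ⟨h, hh, i, π, hiπ⟩ := exists_isSES_ker_of_isSES hsesM hses hq
    have hcxK := complexity_eq_of_isSES hses hfin
    have hcxL := complexity_eq_of_isSES (isSES_subtype_ker hh)
      (by rw [hcx]; exact ENat.sub_ne_top_iff.mpr (.inl hfin))
    exact .step _ (.of A (LinearMap.ker h)) (.of A (LinearMap.ker q)) n (.of_injective f hses.1)
      (.of_injective (LinearMap.ker h).subtype Subtype.val_injective) (hcxK ▸ hpos)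
      (hcxK ▸ hfin) hsyzK i π hiπ (by rw [hcxL, hcx, hcxK]) (ih (isSES_subtype_ker hh))

theorem HasFreeRedCx.syz {M : Type u} [AddCommGroup M] [Module A M] (hM : HasFreeRedCx A M)
    (R : MinFreeRes A M) (n : ℕ) : HasFreeRedCx A (R.syz n) := by
  induction n with
  | zero => exact HasFreeRedCxCat.of_isSES hM R.isSES_syz_zero
  | succ n ih => exact HasFreeRedCxCat.of_isSES ih (R.isSES_syz_succ n)

end ComplexityTest

theorem kernel_and_syzygies_of_hasFreeRedCx_general
    (A : Type u) [CommRing A] [IsLocalRing A] [IsNoetherianRing A]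
    (M : Type u) [AddCommGroup M] [Module A M]
    (hM : HasFreeRedCx A M)
    (K F : Type u) [AddCommGroup K] [Module A K]
    [AddCommGroup F] [Module A F] [Module.Finite A F] [Module.Free A F]
    (f : K →ₗ[A] F) (g : F →ₗ[A] M) (hses : IsSES f g) :
    HasFreeRedCx A K ∧
      ∀ (S : Type u) [AddCommGroup S] [Module A S] (i : ℕ),
        IsSyzygyOf A M S i → HasFreeRedCx A S := by
  refine ⟨HasFreeRedCxCat.of_isSES hM hses, fun S _ _ i hS => ?_⟩
  cases i with
  | zero => exact let ⟨e⟩ := hS; hM.of_equiv e.symm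
  | succ n => exact let ⟨R, ⟨e⟩⟩ := isSyzygyOf_succ_iff.mp hS; (hM.syz R n).of_equiv e.symm

/-- **Proposition 2.2(i)**: over a local ring, the kernel of a surjection onto a module
of free reducible complexity from a free module again has free reducible complexity;
in particular all syzygies of a module of free reducible complexity have free
reducible complexity. -/
theorem kernel_and_syzygies_of_hasFreeRedCx
    (A : Type u) [CommRing A] [IsLocalRing A] [IsNoetherianRing A]
    (M : Type u) [AddCommGroup M] [Module A M] [Module.Finite A M]
    (hM : HasFreeRedCx A M)
    (K F : Type u) [AddCommGroup K] [Module A K] [Module.Finite A K]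
    [AddCommGroup F] [Module A F] [Module.Finite A F] [Module.Free A F]
    (f : K →ₗ[A] F) (g : F →ₗ[A] M) (hses : IsSES f g) :
    HasFreeRedCx A K ∧
      ∀ (S : Type u) [AddCommGroup S] [Module A S] (i : ℕ),
        IsSyzygyOf A M S i → HasFreeRedCx A S :=
  kernel_and_syzygies_of_hasFreeRedCx_general A M hM K F f g hses
end

section
/- Let (A, 𝔪, k) be a commutative Noetherian local ring, let M be a finitely generated A-module having free reducible complexity, and let A → B be a faithfully flat local homomorphism of Noetherian local rings. Then the B-module B ⊗_A M has free reducible complexity. -/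
open CategoryTheory Opposite Filter IsLocalRing

universe u

namespace ComplexityTest

variable (A : Type u) [CommRing A] [IsLocalRing A]

variable (M : Type u) [AddCommGroup M] [Module A M]

variable {A}

variable (A)

section Aux
set_option linter.unusedSectionVars false

variable {A : Type u} [CommRing A] [IsLocalRing A]


lemma coords_mem_of_coords_mem {a b : ℕ} (f : (Fin a → A) →ₗ[A] (Fin b → A))
    {y : Fin a → A} (hy : ∀ i, y i ∈ maximalIdeal A) (j : Fin b) :
    f y j ∈ maximalIdeal A := by
  rw [pi_eq_sum_univ y, map_sum, Finset.sum_apply]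
  refine Ideal.sum_mem _ fun i _ => ?_
  rw [map_smul, Pi.smul_apply, smul_eq_mul]
  exact Ideal.mul_mem_right _ _ (hy i)

lemma bijective_of_sub_mem {n : ℕ} (f : (Fin n → A) →ₗ[A] (Fin n → A))
    (h : ∀ x j, f x j - x j ∈ maximalIdeal A) : Function.Bijective f := by
  set bs := Pi.basisFun A (Fin n) with hbs
  have hdet : IsUnit (LinearMap.toMatrix bs bs f).det := by
    by_contra hu
    have hmem : (LinearMap.toMatrix bs bs f).det ∈ maximalIdeal A :=
      (IsLocalRing.mem_maximalIdeal _).2 hu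
    have h2 : (LinearMap.toMatrix bs bs f).map (residue A) = 1 := by
      ext i j
      have hsub : f (Pi.single j 1) i - (Pi.single j (1:A) : Fin n → A) i ∈ maximalIdeal A := h (Pi.single j 1) i
      have hres : residue A (f (Pi.single j 1) i) = residue A ((Pi.single j (1:A) : Fin n → A) i) := by
        exact (Ideal.Quotient.mk_eq_mk_iff_sub_mem _ _).mpr hsub
      simp only [Matrix.map_apply, LinearMap.toMatrix_apply, hbs, Pi.basisFun_repr,
        Pi.basisFun_apply]
      rw [hres, Pi.single_apply, Matrix.one_apply]
      split_ifs with h1 h2' h2' <;> simp_all [eq_comm]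
    have h1 : residue A ((LinearMap.toMatrix bs bs f).det) = 0 :=
      Ideal.Quotient.eq_zero_iff_mem.2 hmem
    rw [RingHom.map_det, RingHom.mapMatrix_apply, h2] at h1
    simp at h1
  have hb := (LinearEquiv.ofIsUnitDet hdet).bijective
  have hco : ⇑(LinearEquiv.ofIsUnitDet hdet) = ⇑f := by
    funext x
    exact DFunLike.congr_fun (LinearEquiv.coe_ofIsUnitDet hdet) x
  rwa [hco] at hb

lemma exists_lift_free {m : ℕ} {P Q : Type u} [AddCommGroup P] [Module A P]
    [AddCommGroup Q] [Module A Q] (p : P →ₗ[A] Q) (u : (Fin m → A) →ₗ[A] Q)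
    (h : ∀ x, u x ∈ Set.range p) :
    ∃ v : (Fin m → A) →ₗ[A] P, p ∘ₗ v = u := by
  choose s hs using fun i : Fin m => h (Pi.single i 1)
  refine ⟨(Pi.basisFun A (Fin m)).constr ℕ s, ?_⟩
  apply (Pi.basisFun A (Fin m)).ext
  intro i
  simp only [LinearMap.comp_apply, Module.Basis.constr_basis]
  rw [hs i, Pi.basisFun_apply]


noncomputable def liftOfRange {m : ℕ} {P Q : Type u} [AddCommGroup P] [Module A P]
    [AddCommGroup Q] [Module A Q] (p : P →ₗ[A] Q) (u : (Fin m → A) →ₗ[A] Q)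
    (h : ∀ x, u x ∈ Set.range p) : (Fin m → A) →ₗ[A] P :=
  (exists_lift_free p u h).choose

lemma liftOfRange_spec {m : ℕ} {P Q : Type u} [AddCommGroup P] [Module A P]
    [AddCommGroup Q] [Module A Q] (p : P →ₗ[A] Q) (u : (Fin m → A) →ₗ[A] Q)
    (h : ∀ x, u x ∈ Set.range p) : p ∘ₗ liftOfRange p u h = u :=
  (exists_lift_free p u h).choose_spec

variable {N : Type u} [AddCommGroup N] [Module A N]

lemma aug_d_zero (R : MinFreeRes A N) (x : Fin (R.b 1) → A) : R.aug (R.d 0 x) = 0 :=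
  (R.exact_zero _).mpr ⟨x, rfl⟩

lemma d_d_zero (R : MinFreeRes A N) (n : ℕ) (x : Fin (R.b (n+2)) → A) :
    R.d n (R.d (n+1) x) = 0 :=
  (R.exact_succ n _).mpr ⟨x, rfl⟩

abbrev LiftPair (R R' : MinFreeRes A N) (n : ℕ) : Type u :=
  { q : ((Fin (R.b n) → A) →ₗ[A] (Fin (R'.b n) → A)) ×
        ((Fin (R.b (n+1)) → A) →ₗ[A] (Fin (R'.b (n+1)) → A)) //
    R'.d n ∘ₗ q.2 = q.1 ∘ₗ R.d n }

noncomputable def lift0 (R R' : MinFreeRes A N) :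
    (Fin (R.b 0) → A) →ₗ[A] (Fin (R'.b 0) → A) :=
  liftOfRange R'.aug R.aug (fun x => R'.aug_surjective (R.aug x))

lemma lift0_spec (R R' : MinFreeRes A N) : R'.aug ∘ₗ lift0 R R' = R.aug :=
  liftOfRange_spec _ _ _

lemma lift0_range (R R' : MinFreeRes A N) (x : Fin (R.b (0+1)) → A) :
    (lift0 R R' ∘ₗ R.d 0) x ∈ Set.range ⇑(R'.d 0) := by
  refine (R'.exact_zero _).mp ?_
  have h0 := DFunLike.congr_fun (lift0_spec R R') (R.d 0 x)
  simp only [LinearMap.comp_apply] at h0 ⊢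
  rw [h0, aug_d_zero]

noncomputable def chainLiftBase (R R' : MinFreeRes A N) : LiftPair R R' 0 :=
  ⟨(lift0 R R', liftOfRange (R'.d 0) (lift0 R R' ∘ₗ R.d 0) (lift0_range R R')),
    liftOfRange_spec (R'.d 0) (lift0 R R' ∘ₗ R.d 0) (lift0_range R R')⟩

lemma step_range (R R' : MinFreeRes A N) (n : ℕ) (prev : LiftPair R R' n)
    (x : Fin (R.b (n+1+1)) → A) :
    (prev.1.2 ∘ₗ R.d (n+1)) x ∈ Set.range ⇑(R'.d (n+1)) := by
  refine (R'.exact_succ n _).mp ?_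
  have h0 := DFunLike.congr_fun prev.2 (R.d (n+1) x)
  simp only [LinearMap.comp_apply] at h0 ⊢
  rw [h0, d_d_zero, map_zero]

noncomputable def chainLiftStep (R R' : MinFreeRes A N) (n : ℕ)
    (prev : LiftPair R R' n) : LiftPair R R' (n+1) :=
  ⟨(prev.1.2, liftOfRange (R'.d (n+1)) (prev.1.2 ∘ₗ R.d (n+1)) (step_range R R' n prev)),
    liftOfRange_spec (R'.d (n+1)) (prev.1.2 ∘ₗ R.d (n+1)) (step_range R R' n prev)⟩

noncomputable def chainLiftAux (R R' : MinFreeRes A N) : ∀ n : ℕ, LiftPair R R' n :=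
  Nat.rec (chainLiftBase R R') (chainLiftStep R R')

lemma chainLiftAux_zero (R R' : MinFreeRes A N) :
    chainLiftAux R R' 0 = chainLiftBase R R' := rfl

lemma chainLiftAux_succ (R R' : MinFreeRes A N) (n : ℕ) :
    chainLiftAux R R' (n+1) = chainLiftStep R R' n (chainLiftAux R R' n) := rfl

lemma exists_chainLift (R R' : MinFreeRes A N) :
    ∃ φ : ∀ n, (Fin (R.b n) → A) →ₗ[A] (Fin (R'.b n) → A),
      R'.aug ∘ₗ φ 0 = R.aug ∧ ∀ n, R'.d n ∘ₗ φ (n+1) = φ n ∘ₗ R.d n := by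
  refine ⟨fun n => (chainLiftAux R R' n).1.1, ?_, fun n => ?_⟩
  · show R'.aug ∘ₗ (chainLiftAux R R' 0).1.1 = R.aug
    rw [chainLiftAux_zero]
    exact lift0_spec R R'
  · show R'.d n ∘ₗ (chainLiftAux R R' (n+1)).1.1 = (chainLiftAux R R' n).1.1 ∘ₗ R.d n
    have h1 : (chainLiftAux R R' (n+1)).1.1 = (chainLiftAux R R' n).1.2 := by
      rw [chainLiftAux_succ]; rfl
    rw [h1]
    exact (chainLiftAux R R' n).2

section Homotopy

variable (R : MinFreeRes A N) (ψ : ∀ n, (Fin (R.b n) → A) →ₗ[A] (Fin (R.b n) → A))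

abbrev HPair (n : ℕ) : Type u :=
  { q : ((Fin (R.b n) → A) →ₗ[A] (Fin (R.b (n+1)) → A)) ×
        ((Fin (R.b (n+1)) → A) →ₗ[A] (Fin (R.b (n+2)) → A)) //
    ψ (n+1) - LinearMap.id = R.d (n+1) ∘ₗ q.2 + q.1 ∘ₗ R.d n }

lemma hzero_range (h0 : R.aug ∘ₗ ψ 0 = R.aug) (x : Fin (R.b 0) → A) :
    (ψ 0 - (LinearMap.id : (Fin (R.b 0) → A) →ₗ[A] (Fin (R.b 0) → A))) x
      ∈ Set.range ⇑(R.d 0) := by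
  refine (R.exact_zero _).mp ?_
  have e1 := DFunLike.congr_fun h0 x
  simp only [LinearMap.comp_apply] at e1
  simp [map_sub, e1]

noncomputable def hzero (h0 : R.aug ∘ₗ ψ 0 = R.aug) :
    (Fin (R.b 0) → A) →ₗ[A] (Fin (R.b 1) → A) :=
  liftOfRange (R.d 0) (ψ 0 - LinearMap.id) (hzero_range R ψ h0)

lemma hzero_spec (h0 : R.aug ∘ₗ ψ 0 = R.aug) :
    R.d 0 ∘ₗ hzero R ψ h0 = ψ 0 - LinearMap.id :=
  liftOfRange_spec _ _ _

lemma hone_range (h0 : R.aug ∘ₗ ψ 0 = R.aug)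
    (hc : ∀ n, R.d n ∘ₗ ψ (n+1) = ψ n ∘ₗ R.d n) (x : Fin (R.b 1) → A) :
    (ψ 1 - LinearMap.id - hzero R ψ h0 ∘ₗ R.d 0 :
      (Fin (R.b 1) → A) →ₗ[A] (Fin (R.b 1) → A)) x ∈ Set.range ⇑(R.d 1) := by
  refine (R.exact_succ 0 _).mp ?_
  have e1 := DFunLike.congr_fun (hc 0) x
  have e2 := DFunLike.congr_fun (hzero_spec R ψ h0) (R.d 0 x)
  simp only [LinearMap.comp_apply, LinearMap.sub_apply, LinearMap.id_apply] at e1 e2 ⊢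
  rw [map_sub, map_sub, e1, e2]
  abel

noncomputable def homotopyBase (h0 : R.aug ∘ₗ ψ 0 = R.aug)
    (hc : ∀ n, R.d n ∘ₗ ψ (n+1) = ψ n ∘ₗ R.d n) : HPair R ψ 0 :=
  ⟨(hzero R ψ h0, liftOfRange (R.d 1) (ψ 1 - LinearMap.id - hzero R ψ h0 ∘ₗ R.d 0)
      (hone_range R ψ h0 hc)),
    by
      have hsp := liftOfRange_spec (R.d 1) (ψ 1 - LinearMap.id - hzero R ψ h0 ∘ₗ R.d 0)
        (hone_range R ψ h0 hc)
      rw [hsp]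
      abel⟩

lemma hstep_range (hc : ∀ n, R.d n ∘ₗ ψ (n+1) = ψ n ∘ₗ R.d n) (n : ℕ) (q : HPair R ψ n)
    (x : Fin (R.b (n+2)) → A) :
    (ψ (n+2) - LinearMap.id - q.1.2 ∘ₗ R.d (n+1) :
      (Fin (R.b (n+2)) → A) →ₗ[A] (Fin (R.b (n+2)) → A)) x
      ∈ Set.range ⇑(R.d (n+2)) := by
  refine (R.exact_succ (n+1) _).mp ?_
  have e1 := DFunLike.congr_fun (hc (n+1)) x
  have e2 := DFunLike.congr_fun q.2 (R.d (n+1) x)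
  have e3 : R.d n (R.d (n+1) x) = 0 := d_d_zero R n x
  simp only [LinearMap.comp_apply, LinearMap.sub_apply, LinearMap.id_apply,
    LinearMap.add_apply] at e1 e2 ⊢
  rw [map_sub, map_sub, e1]
  rw [e3, map_zero, add_zero] at e2
  rw [← e2]
  abel

noncomputable def homotopyStep (hc : ∀ n, R.d n ∘ₗ ψ (n+1) = ψ n ∘ₗ R.d n) (n : ℕ)
    (q : HPair R ψ n) : HPair R ψ (n+1) :=
  ⟨(q.1.2, liftOfRange (R.d (n+2)) (ψ (n+2) - LinearMap.id - q.1.2 ∘ₗ R.d (n+1))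
      (hstep_range R ψ hc n q)),
    by
      have hsp := liftOfRange_spec (R.d (n+2)) (ψ (n+2) - LinearMap.id - q.1.2 ∘ₗ R.d (n+1))
        (hstep_range R ψ hc n q)
      rw [hsp]
      abel⟩

noncomputable def homotopyAux (h0 : R.aug ∘ₗ ψ 0 = R.aug)
    (hc : ∀ n, R.d n ∘ₗ ψ (n+1) = ψ n ∘ₗ R.d n) : ∀ n : ℕ, HPair R ψ n :=
  Nat.rec (homotopyBase R ψ h0 hc) (homotopyStep R ψ hc)

lemma chainLiftId_sub_mem (h0 : R.aug ∘ₗ ψ 0 = R.aug)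
    (hc : ∀ n, R.d n ∘ₗ ψ (n+1) = ψ n ∘ₗ R.d n) :
    ∀ n (x : Fin (R.b n) → A) j, ψ n x j - x j ∈ maximalIdeal A := by
  intro n x j
  cases n with
  | zero =>
    have e := DFunLike.congr_fun (hzero_spec R ψ h0) x
    simp only [LinearMap.comp_apply, LinearMap.sub_apply, LinearMap.id_apply] at e
    have hx : ψ 0 x j - x j = R.d 0 (hzero R ψ h0 x) j := by
      rw [e]; simp
    rw [hx]
    exact R.minimal 0 _ j
  | succ n =>
    have e := DFunLike.congr_fun (homotopyAux R ψ h0 hc n).2 x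
    simp only [LinearMap.comp_apply, LinearMap.sub_apply, LinearMap.id_apply,
      LinearMap.add_apply] at e
    have hx : ψ (n+1) x j - x j
        = R.d (n+1) ((homotopyAux R ψ h0 hc n).1.2 x) j
          + (homotopyAux R ψ h0 hc n).1.1 (R.d n x) j := by
      rw [show ψ (n+1) x j - x j = (ψ (n+1) x - x) j by simp, e]; simp
    rw [hx]
    exact Ideal.add_mem _ (R.minimal (n+1) _ j)
      (coords_mem_of_coords_mem _ (fun i => R.minimal n x i) j)

lemma bijective_chainLiftId (h0 : R.aug ∘ₗ ψ 0 = R.aug)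
    (hc : ∀ n, R.d n ∘ₗ ψ (n+1) = ψ n ∘ₗ R.d n) (n : ℕ) :
    Function.Bijective (ψ n) :=
  bijective_of_sub_mem (ψ n) (fun x j => chainLiftId_sub_mem R ψ h0 hc n x j)

end Homotopy

theorem MinFreeRes.b_eq_s1 (R R' : MinFreeRes A N) (n : ℕ) : R.b n = R'.b n := by
  obtain ⟨φ, hφ0, hφc⟩ := exists_chainLift R R'
  obtain ⟨φ', hφ'0, hφ'c⟩ := exists_chainLift R' R
  have hcomp0 : R.aug ∘ₗ (φ' 0 ∘ₗ φ 0) = R.aug := by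
    rw [← LinearMap.comp_assoc, hφ'0, hφ0]
  have hcompc : ∀ m, R.d m ∘ₗ (φ' (m+1) ∘ₗ φ (m+1)) = (φ' m ∘ₗ φ m) ∘ₗ R.d m := by
    intro m
    rw [← LinearMap.comp_assoc, hφ'c m, LinearMap.comp_assoc, hφc m, LinearMap.comp_assoc]
  have hcomp0' : R'.aug ∘ₗ (φ 0 ∘ₗ φ' 0) = R'.aug := by
    rw [← LinearMap.comp_assoc, hφ0, hφ'0]
  have hcompc' : ∀ m, R'.d m ∘ₗ (φ (m+1) ∘ₗ φ' (m+1)) = (φ m ∘ₗ φ' m) ∘ₗ R'.d m := by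
    intro m
    rw [← LinearMap.comp_assoc, hφc m, LinearMap.comp_assoc, hφ'c m, LinearMap.comp_assoc]
  have hb1 := bijective_chainLiftId (R := R) (fun m => φ' m ∘ₗ φ m) hcomp0 hcompc n
  have hb2 := bijective_chainLiftId (R := R') (fun m => φ m ∘ₗ φ' m) hcomp0' hcompc' n
  simp only [LinearMap.coe_comp] at hb1 hb2
  have hbij : Function.Bijective (φ n) :=
    ⟨Function.Injective.of_comp hb1.injective, Function.Surjective.of_comp hb2.surjective⟩
  have hfr := LinearEquiv.finrank_eq (LinearEquiv.ofBijective (φ n) hbij)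
  rwa [Module.finrank_pi, Module.finrank_pi, Fintype.card_fin, Fintype.card_fin] at hfr

section BaseChange

variable {B : Type u} [CommRing B] [IsLocalRing B] [Algebra A B] [Module.Flat A B]
  [IsLocalHom (algebraMap A B)]

lemma algebraMap_mem_maximalIdeal {r : A} (hr : r ∈ maximalIdeal A) :
    algebraMap A B r ∈ maximalIdeal B := by
  rw [IsLocalRing.mem_maximalIdeal, mem_nonunits_iff] at hr ⊢
  exact fun hu => hr (IsLocalHom.map_nonunit r hu)

/-- The standard isomorphism `B ⊗[A] A^m ≃ B^m`. -/
noncomputable def pse (m : ℕ) : TensorProduct A B (Fin m → A) ≃ₗ[B] (Fin m → B) :=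
  TensorProduct.piScalarRight A B B (Fin m)

lemma baseChange_exact {P Q T : Type u} [AddCommGroup P] [Module A P]
    [AddCommGroup Q] [Module A Q] [AddCommGroup T] [Module A T]
    {f : P →ₗ[A] Q} {g : Q →ₗ[A] T} (h : Function.Exact f g) :
    Function.Exact (f.baseChange B) (g.baseChange B) := by
  have := Module.Flat.lTensor_exact B h
  rwa [show (f.baseChange B : TensorProduct A B P → TensorProduct A B Q) = f.lTensor B from
      LinearMap.baseChange_eq_ltensor f,
    show (g.baseChange B : TensorProduct A B Q → TensorProduct A B T) = g.lTensor B from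
      LinearMap.baseChange_eq_ltensor g]

lemma baseChange_surjective {P Q : Type u} [AddCommGroup P] [Module A P]
    [AddCommGroup Q] [Module A Q] {f : P →ₗ[A] Q} (h : Function.Surjective f) :
    Function.Surjective (f.baseChange B) := by
  rw [show (f.baseChange B : TensorProduct A B P → TensorProduct A B Q) = f.lTensor B from
    LinearMap.baseChange_eq_ltensor f]
  exact LinearMap.lTensor_surjective B h

lemma baseChange_injective {P Q : Type u} [AddCommGroup P] [Module A P]
    [AddCommGroup Q] [Module A Q] {f : P →ₗ[A] Q} (h : Function.Injective f) :
    Function.Injective (f.baseChange B) := by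
  rw [show (f.baseChange B : TensorProduct A B P → TensorProduct A B Q) = f.lTensor B from
    LinearMap.baseChange_eq_ltensor f]
  exact Module.Flat.lTensor_preserves_injective_linearMap f h

variable {N : Type u} [AddCommGroup N] [Module A N]

lemma conj_comp_eq {M1 M2 N1 N2 : Type u} [AddCommGroup M1] [Module B M1]
    [AddCommGroup M2] [Module B M2] [AddCommGroup N1] [Module B N1]
    [AddCommGroup N2] [Module B N2] (f : M1 →ₗ[B] M2) (e1 : M1 ≃ₗ[B] N1)
    (e2 : M2 ≃ₗ[B] N2) :
    (e2.toLinearMap ∘ₗ f ∘ₗ e1.symm.toLinearMap) ∘ₗ e1.toLinearMap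
      = e2.toLinearMap ∘ₗ f := by
  ext x
  simp

lemma comp_symm_comp_eq {M2 M3 N2 : Type u} [AddCommGroup M2] [Module B M2]
    [AddCommGroup M3] [Module B M3] [AddCommGroup N2] [Module B N2]
    (f : M2 →ₗ[B] M3) (e2 : M2 ≃ₗ[B] N2) :
    (f ∘ₗ e2.symm.toLinearMap) ∘ₗ e2.toLinearMap
      = (LinearEquiv.refl B M3).toLinearMap ∘ₗ f := by
  ext x
  simp

set_option synthInstance.maxHeartbeats 400000 in
set_option maxHeartbeats 1000000 in
/-- Base change of a minimal free resolution along a flat local homomorphism. -/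
noncomputable def MinFreeRes.baseChange (R : MinFreeRes A N) :
    MinFreeRes B (TensorProduct A B N) where
  b := R.b
  d n := (pse (R.b n)).toLinearMap ∘ₗ (R.d n).baseChange B
          ∘ₗ (pse (R.b (n+1))).symm.toLinearMap
  aug := R.aug.baseChange B ∘ₗ (pse (R.b 0)).symm.toLinearMap
  aug_surjective := by
    exact (baseChange_surjective R.aug_surjective).comp (pse (R.b 0)).symm.surjective
  exact_zero := by
    exact Function.Exact.of_ladder_linearEquiv_of_exact
      (e₁ := pse (R.b 1)) (e₂ := pse (R.b 0)) (e₃ := LinearEquiv.refl B (TensorProduct A B N))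
      (conj_comp_eq ((R.d 0).baseChange B) (pse (R.b 1)) (pse (R.b 0)))
      (comp_symm_comp_eq (R.aug.baseChange B) (pse (R.b 0)))
      (baseChange_exact (B := B) R.exact_zero)
  exact_succ := by
    intro n
    exact Function.Exact.of_ladder_linearEquiv_of_exact
      (e₁ := pse (R.b (n+2))) (e₂ := pse (R.b (n+1))) (e₃ := pse (R.b n))
      (conj_comp_eq ((R.d (n+1)).baseChange B) (pse (R.b (n+2))) (pse (R.b (n+1))))
      (conj_comp_eq ((R.d n).baseChange B) (pse (R.b (n+1))) (pse (R.b n)))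
      (baseChange_exact (B := B) (R.exact_succ n))
  minimal := by
    intro n x i
    simp only [LinearMap.comp_apply, LinearEquiv.coe_coe]
    generalize (pse (A := A) (R.b (n+1))).symm x = z
    induction z using TensorProduct.induction_on with
    | zero =>
      simp only [map_zero, Pi.zero_apply]
      exact Submodule.zero_mem _
    | tmul b0 y =>
      rw [LinearMap.baseChange_tmul]
      have hv : (pse (R.b n)) (b0 ⊗ₜ[A] (R.d n) y) i = (R.d n y i) • b0 := by
        rw [pse, TensorProduct.piScalarRight_apply, TensorProduct.piScalarRightHom_tmul]
      rw [hv, Algebra.smul_def]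
      exact Ideal.mul_mem_right _ _ (algebraMap_mem_maximalIdeal (R.minimal n y i))
    | add z w hz hw =>
      rw [map_add, map_add, Pi.add_apply]
      exact Ideal.add_mem _ hz hw

lemma MinFreeRes.baseChange_b (R : MinFreeRes A N) :
    (R.baseChange (B := B)).b = R.b := rfl

/-- Flat base change commutes with kernels. -/
noncomputable def kerBaseChangeEquiv {P Q : Type u} [AddCommGroup P] [Module A P]
    [AddCommGroup Q] [Module A Q] (f : P →ₗ[A] Q) :
    TensorProduct A B (LinearMap.ker f) ≃ₗ[B] LinearMap.ker (f.baseChange B) :=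
  (LinearEquiv.ofInjective ((LinearMap.ker f).subtype.baseChange B)
    (baseChange_injective (Submodule.injective_subtype _))).trans
    (LinearEquiv.ofEq _ _
      (by
        rw [← LinearMap.exact_iff.mp (baseChange_exact (LinearMap.exact_subtype_ker_map f))]))

/-- Conjugating a linear map by an equivalence on the source preserves the kernel
up to equivalence. -/
noncomputable def kerCompEquiv {M2 M3 N2 : Type u} [AddCommGroup M2] [Module B M2]
    [AddCommGroup M3] [Module B M3] [AddCommGroup N2] [Module B N2]
    (g : M2 →ₗ[B] M3) (β : N2 ≃ₗ[B] M2) :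
    LinearMap.ker g ≃ₗ[B] LinearMap.ker (g ∘ₗ β.toLinearMap) :=
  LinearEquiv.ofSubmodules β.symm _ _ (by
    ext x
    rw [Submodule.mem_map_equiv]
    simp [LinearMap.mem_ker])

lemma hasComplexityLE_baseChange_iff (R0 : MinFreeRes A N) (t : ℕ) :
    HasComplexityLE B (TensorProduct A B N) t ↔ HasComplexityLE A N t := by
  constructor
  · rintro ⟨R', a, h⟩
    refine ⟨R0, a, ?_⟩
    have hb : ∀ n, R0.b n = R'.b n := fun n =>
      MinFreeRes.b_eq_s1 (R0.baseChange (B := B)) R' n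
    filter_upwards [h] with n hn
    rw [hb n]
    exact hn
  · rintro ⟨R, a, h⟩
    exact ⟨R.baseChange, a, h⟩

lemma complexity_baseChange (R0 : MinFreeRes A N) :
    complexity B (TensorProduct A B N) = complexity A N := by
  unfold complexity
  congr 1
  ext c
  simp only [Set.mem_setOf_eq]
  constructor
  · rintro ⟨t, rfl, h⟩
    exact ⟨t, rfl, (hasComplexityLE_baseChange_iff R0 t).mp h⟩
  · rintro ⟨t, rfl, h⟩
    exact ⟨t, rfl, (hasComplexityLE_baseChange_iff R0 t).mpr h⟩

lemma hasFiniteProjDim_baseChange (h : HasFiniteProjDim A N) :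
    HasFiniteProjDim B (TensorProduct A B N) := by
  obtain ⟨t, R, hR⟩ := h
  exact ⟨t, R.baseChange, hR⟩

lemma isSyzygyOf_baseChange {S : Type u} [AddCommGroup S] [Module A S] (n : ℕ)
    (h : IsSyzygyOf A N S n) :
    IsSyzygyOf B (TensorProduct A B N) (TensorProduct A B S) n := by
  match n, h with
  | 0, ⟨e⟩ => exact ⟨LinearEquiv.baseChange A B _ _ e⟩
  | 1, ⟨R, ⟨e⟩⟩ =>
    refine ⟨R.baseChange, ⟨?_⟩⟩
    exact (LinearEquiv.baseChange A B _ _ e).trans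
      ((kerBaseChangeEquiv R.aug).trans
        (kerCompEquiv (R.aug.baseChange B) (pse (R.b 0)).symm))
  | (m+2), ⟨R, ⟨e⟩⟩ =>
    refine ⟨R.baseChange, ⟨?_⟩⟩
    refine ((LinearEquiv.baseChange A B _ _ e).trans
      ((kerBaseChangeEquiv (R.d m)).trans
        (kerCompEquiv ((R.d m).baseChange B) (pse (R.b (m+1))).symm))).trans
      (LinearEquiv.ofEq _ _ ?_)
    exact (LinearMap.ker_comp_of_ker_eq_bot ((R.d m).baseChange B ∘ₗ (pse (R.b (m+1))).symm.toLinearMap) ((pse (A := A) (R.b m)).ker)).symm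

lemma isSES_baseChange {K S : Type u} [AddCommGroup K] [Module A K]
    [AddCommGroup S] [Module A S] {f : N →ₗ[A] K} {g : K →ₗ[A] S}
    (h : IsSES f g) : IsSES (f.baseChange B) (g.baseChange B) :=
  ⟨baseChange_injective h.1, baseChange_exact h.2.1, baseChange_surjective h.2.2⟩

lemma exists_minFreeRes_of_complexity_ne_top (h : complexity A N ≠ ⊤) :
    Nonempty (MinFreeRes A N) := by
  by_contra hn
  apply h
  have hempty : {c : ℕ∞ | ∃ t : ℕ, c = ↑t ∧ HasComplexityLE A N t} = ∅ := by
    ext c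
    simp only [Set.mem_setOf_eq, Set.mem_empty_iff_false, iff_false, not_exists]
    rintro t ⟨_, R, _⟩
    exact hn ⟨R⟩
  rw [complexity, hempty, sInf_empty]

end BaseChange

end Aux

end ComplexityTest

open ComplexityTest

/-- **Proposition 2.2(ii)**: free reducible complexity is preserved under faithfully
flat local base change: if `A → B` is a faithfully flat local homomorphism of Noetherian
local rings and `M` has free reducible complexity over `A`, then `B ⊗_A M` has free
reducible complexity over `B`. -/
theorem hasFreeRedCx_of_faithfullyFlat_baseChange
    (A : Type u) [CommRing A] [IsLocalRing A] [IsNoetherianRing A]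
    (B : Type u) [CommRing B] [IsLocalRing B] [IsNoetherianRing B]
    [Algebra A B] [Module.FaithfullyFlat A B] [IsLocalHom (algebraMap A B)]
    (M : Type u) [AddCommGroup M] [Module A M] [Module.Finite A M]
    (hM : HasFreeRedCx A M) :
    HasFreeRedCx B (TensorProduct A B M) := by
  have key : ∀ (N0 : ModuleCat.{u} A), HasFreeRedCxCat N0 →
      HasFreeRedCxCat (ModuleCat.of B (TensorProduct A B N0)) := by
    intro N0 hN0
    induction hN0 with
    | of_finite_projDim N1 hfg h =>
      have : Module.Finite A N1 := hfg
      exact HasFreeRedCxCat.of_finite_projDim _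
        (inferInstanceAs (Module.Finite B (TensorProduct A B ↥N1)))
        (hasFiniteProjDim_baseChange h)
    | step M1 K1 S1 n hfg hKfg hpos hfin hsyz f g hses hcx hK ih =>
      have hfgA : Module.Finite A M1 := hfg
      have hKfgA : Module.Finite A K1 := hKfg
      obtain ⟨RM⟩ := exists_minFreeRes_of_complexity_ne_top (N := ↥M1) hfin
      have hKfin : complexity A K1 ≠ ⊤ := by
        rw [hcx]
        intro htop
        apply hfin
        have hle : (⊤ : ℕ∞) ≤ complexity A M1 := htop ▸ tsub_le_self
        exact top_le_iff.mp hle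
      obtain ⟨RK⟩ := exists_minFreeRes_of_complexity_ne_top (N := ↥K1) hKfin
      refine HasFreeRedCxCat.step (ModuleCat.of B (TensorProduct A B M1))
        (ModuleCat.of B (TensorProduct A B K1)) (ModuleCat.of B (TensorProduct A B S1)) n
        (inferInstanceAs (Module.Finite B (TensorProduct A B ↥M1)))
        (inferInstanceAs (Module.Finite B (TensorProduct A B ↥K1)))
        ?_ ?_ ?_ (f.baseChange B) (g.baseChange B) ?_ ?_ ih
      · show (0 : ℕ∞) < complexity B (TensorProduct A B M1)
        rw [complexity_baseChange RM]
        exact hpos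
      · show complexity B (TensorProduct A B M1) ≠ ⊤
        rw [complexity_baseChange RM]
        exact hfin
      · exact isSyzygyOf_baseChange n hsyz
      · exact isSES_baseChange hses
      · show complexity B (TensorProduct A B K1)
          = complexity B (TensorProduct A B M1) - 1
        rw [complexity_baseChange RK, complexity_baseChange RM]
        exact hcx
  exact key (ModuleCat.of A M) hM
end
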